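/- Euler step exactness of the reparameterized ODE: if on an interval [γ_k, γ_{k+1}] the function ẑ is constant and z_γ solves dz/dγ = (σ̇_γ/σ_γ) z + ((α̇_γ σ_γ - α_γ σ̇_γ)/σ_γ) ẑ, then z_{γ_{k+1}} = σ_{γ_{k+1}} ( z_{γ_k}/σ_{γ_k} + (α_{γ_{k+1}}/σ_{γ_{k+1}} - α_{γ_k}/σ_{γ_k}) ẑ ). -/

import Mathlib

open Real Set

/-!
Dividing the ODE by `σ` turns it into `d(z/σ) = zhat d(α/σ)`, i.e. `z/σ - (α/σ) zhat` has zero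
derivative. Being constant on the step interval, it takes the same value at both endpoints, which
is the update rule.
-/

theorem eq_of_forall_mem_uIcc_hasDerivAt_zero {E : Type*} [NormedAddCommGroup E]
    [NormedSpace ℝ E] {f : ℝ → E} {a b : ℝ} (hf : ∀ x ∈ uIcc a b, HasDerivAt f 0 x) :
    f b = f a := by
  have h := (convex_uIcc a b).norm_image_sub_le_of_norm_hasDerivWithin_le (C := 0)
    (fun x hx => (hf x hx).hasDerivWithinAt) (by simp) left_mem_uIcc right_mem_uIcc
  simpa [sub_eq_zero] using h

theorem hasDerivAt_inv_smul_sub_div_smul_eq_zero {E : Type*} [NormedAddCommGroup E]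
    [NormedSpace ℝ E] {α σ : ℝ → ℝ} {z : ℝ → E} {a s γ : ℝ} {zhat : E}
    (hα : HasDerivAt α a γ) (hσ : HasDerivAt σ s γ) (hσ0 : σ γ ≠ 0)
    (hz : HasDerivAt z ((s / σ γ) • z γ + ((a * σ γ - α γ * s) / σ γ) • zhat) γ) :
    HasDerivAt (fun t => (σ t)⁻¹ • z t - (α t / σ t) • zhat) 0 γ := by
  refine (((hσ.inv hσ0).smul hz).sub ((hα.div hσ hσ0).smul_const zhat)).congr_deriv ?_
  match_scalars <;> simp only [Pi.inv_apply] <;> field_simp <;> ring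

theorem stmt_17_general {d : ℕ} (γk γk1 : ℝ)
    (α σ α' σ' : ℝ → ℝ)
    (hσpos : ∀ γ, 0 < σ γ)
    (hα : ∀ γ ∈ uIcc γk γk1, HasDerivAt α (α' γ) γ)
    (hσ : ∀ γ ∈ uIcc γk γk1, HasDerivAt σ (σ' γ) γ)
    (zhat : EuclideanSpace ℝ (Fin d))
    (z : ℝ → EuclideanSpace ℝ (Fin d))
    (hz : ∀ γ ∈ uIcc γk γk1, HasDerivAt z
      ((σ' γ / σ γ) • z γ + ((α' γ * σ γ - α γ * σ' γ) / σ γ) • zhat) γ) :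
    z γk1 = σ γk1 • ((σ γk)⁻¹ • z γk
      + (α γk1 / σ γk1 - α γk / σ γk) • zhat) := by
  have hconst : (σ γk1)⁻¹ • z γk1 - (α γk1 / σ γk1) • zhat
      = (σ γk)⁻¹ • z γk - (α γk / σ γk) • zhat :=
    eq_of_forall_mem_uIcc_hasDerivAt_zero fun γ hγ =>
      hasDerivAt_inv_smul_sub_div_smul_eq_zero (hα γ hγ) (hσ γ hγ) (hσpos γ).ne' (hz γ hγ)
  rw [sub_eq_iff_eq_add] at hconst
  calc z γk1 = σ γk1 • ((σ γk1)⁻¹ • z γk1) := (smul_inv_smul₀ (hσpos γk1).ne' _).symm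
    _ = _ := by rw [hconst]; module

/-- Euler step exactness: if `zhat` is constant on `[γ_k, γ_{k+1}]` and `z` solves
`dz/dγ = (σ̇/σ) z + ((α̇σ - ασ̇)/σ) zhat`, then
`z_{γ_{k+1}} = σ_{γ_{k+1}} (z_{γ_k}/σ_{γ_k} + (α_{γ_{k+1}}/σ_{γ_{k+1}} - α_{γ_k}/σ_{γ_k}) zhat)`. -/
theorem stmt_17 {d : ℕ} (γk γk1 : ℝ)
    (α σ α' σ' : ℝ → ℝ)
    (hαpos : ∀ γ, 0 < α γ) (hσpos : ∀ γ, 0 < σ γ)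
    (hα : ∀ γ ∈ uIcc γk γk1, HasDerivAt α (α' γ) γ)
    (hσ : ∀ γ ∈ uIcc γk γk1, HasDerivAt σ (σ' γ) γ)
    (zhat : EuclideanSpace ℝ (Fin d))
    (z : ℝ → EuclideanSpace ℝ (Fin d))
    (hz : ∀ γ ∈ uIcc γk γk1, HasDerivAt z
      ((σ' γ / σ γ) • z γ + ((α' γ * σ γ - α γ * σ' γ) / σ γ) • zhat) γ) :
    z γk1 = σ γk1 • ((σ γk)⁻¹ • z γk
      + (α γk1 / σ γk1 - α γk / σ γk) • zhat) :=
  stmt_17_general γk γk1 α σ α' σ' hσpos hα hσ zhat z hz
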